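/- arXiv:2312.10231 — 9 statements merged into one kernel-verified Lean document; each statement's English description precedes it below -/
import Mathlib

section
/- Let A = !![a11, a12; a21, a22] be a real 2×2 matrix with Tr(A) < 0, det(A) > 0 and a22 > 0 (so a11 < 0). Let 0 < λ < μ. Then there exists exactly one pair (d1, d2) with d1 > 0 and d2 > 0 satisfying simultaneously det(A) − a11·λ·d2 − a22·λ·d1 + λ²·d1·d2 = 0 and det(A) − a11·μ·d2 − a22·μ·d1 + μ²·d1·d2 = 0; moreover its second coordinate equals d2 = (det(A)(λ+μ) − √((det(A)(λ+μ))² − 4·a11·a22·det(A)·λ·μ)) / (2·a11·λ·μ). -/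
open Matrix Polynomial Real

/-!
Subtracting the two hyperbola equations, after scaling by `μ` and `λ`, shows that for `λ ≠ μ`
their common points are those with `λ μ d₁ d₂ = det A` and `a₂₂ d₁ + a₁₁ d₂ = (λ + μ) d₁ d₂`.
Eliminating `d₁` leaves the quadratic `a₁₁ λ μ d₂² - det A (λ + μ) d₂ + det A a₂₂ = 0`, whose
leading and constant coefficients have opposite signs, so it has exactly one positive root.
-/

def hyperbolaEq (D a11 a22 lam : ℝ) (p : ℝ × ℝ) : Prop :=
  D - a11 * lam * p.2 - a22 * lam * p.1 + lam ^ 2 * p.1 * p.2 = 0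

noncomputable def quadraticRoot (a b c : ℝ) : ℝ := (-b - √(discrim a b c)) / (2 * a)

section Quadratic

variable {a b c : ℝ}

lemma abs_lt_sqrt_discrim (hac : a * c < 0) : |b| < √(discrim a b c) := by
  rw [Real.lt_sqrt (abs_nonneg b), sq_abs, discrim]
  linarith

lemma quadraticRoot_pos (ha : a < 0) (hc : 0 < c) : 0 < quadraticRoot a b c := by
  have hb := abs_lt_sqrt_discrim (b := b) (mul_neg_of_neg_of_pos ha hc)
  exact div_pos_of_neg_of_neg (by linarith [neg_abs_le b]) (by linarith)

lemma quadratic_eq_zero_iff_eq_quadraticRoot (ha : a < 0) (hc : 0 < c) {y : ℝ} (hy : 0 < y) :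
    a * (y * y) + b * y + c = 0 ↔ y = quadraticRoot a b c := by
  have hb := abs_lt_sqrt_discrim (b := b) (mul_neg_of_neg_of_pos ha hc)
  have hnonneg : 0 ≤ discrim a b c := by rw [discrim]; nlinarith [sq_nonneg b]
  rw [quadratic_eq_zero_iff ha.ne (Real.mul_self_sqrt hnonneg).symm, quadraticRoot,
    or_iff_right]
  -- the other root `(-b + √Δ) / (2a)` is negative
  rintro rfl
  exact (div_neg_of_pos_of_neg (by linarith [le_abs_self b]) (by linarith)).not_gt hy

end Quadratic

section Hyperbola

variable {D a11 a22 lam mu : ℝ} {p : ℝ × ℝ}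

local notation "y₀" => quadraticRoot (a11 * lam * mu) (-(D * (lam + mu))) (D * a22)

lemma hyperbolaEq_and_hyperbolaEq_iff (hlm : lam ≠ mu) :
    hyperbolaEq D a11 a22 lam p ∧ hyperbolaEq D a11 a22 mu p ↔
      lam * mu * p.1 * p.2 = D ∧ a22 * p.1 + a11 * p.2 = (lam + mu) * p.1 * p.2 := by
  have hsub : mu - lam ≠ 0 := sub_ne_zero.mpr hlm.symm
  unfold hyperbolaEq
  constructor
  · rintro ⟨e1, e2⟩
    refine ⟨?_, ?_⟩
    · apply mul_left_cancel₀ hsub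
      linear_combination lam * e2 - mu * e1
    · apply mul_left_cancel₀ hsub
      linear_combination e1 - e2
  · rintro ⟨hprod, hsum⟩
    constructor
    · linear_combination -hprod - lam * hsum
    · linear_combination -hprod - mu * hsum

lemma prod_and_sum_iff_quadratic (hlam : lam ≠ 0) (hmu : mu ≠ 0) (hy : p.2 ≠ 0) :
    (lam * mu * p.1 * p.2 = D ∧ a22 * p.1 + a11 * p.2 = (lam + mu) * p.1 * p.2) ↔
      p.1 = D / (lam * mu * p.2) ∧
        a11 * lam * mu * (p.2 * p.2) + -(D * (lam + mu)) * p.2 + D * a22 = 0 := by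
  constructor
  · rintro ⟨hprod, hsum⟩
    refine ⟨by field_simp; linarith, ?_⟩
    linear_combination ((lam + mu) * p.2 - a22) * hprod + lam * mu * p.2 * hsum
  · rintro ⟨hx, hq⟩
    rw [hx]
    refine ⟨by field_simp, ?_⟩
    field_simp
    linear_combination hq

lemma pos_common_point_iff (ha11 : a11 < 0) (ha22 : 0 < a22) (hD : 0 < D) (hlam : 0 < lam)
    (hmu : 0 < mu) (hlm : lam ≠ mu) :
    (0 < p.1 ∧ 0 < p.2 ∧ hyperbolaEq D a11 a22 lam p ∧ hyperbolaEq D a11 a22 mu p) ↔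
      p = (D / (lam * mu * y₀), y₀) := by
  have hmul : a11 * lam * mu < 0 := by nlinarith [mul_pos hlam hmu]
  have hc : 0 < D * a22 := mul_pos hD ha22
  have hy₀ : 0 < y₀ := quadraticRoot_pos hmul hc
  constructor
  · rintro ⟨-, hy, hpair⟩
    rw [hyperbolaEq_and_hyperbolaEq_iff hlm, prod_and_sum_iff_quadratic hlam.ne' hmu.ne' hy.ne',
      quadratic_eq_zero_iff_eq_quadraticRoot hmul hc hy] at hpair
    obtain ⟨hx, hy_eq⟩ := hpair
    exact Prod.ext (by rw [hx, hy_eq]) hy_eq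
  · rintro rfl
    refine ⟨by positivity, hy₀, ?_⟩
    rw [hyperbolaEq_and_hyperbolaEq_iff hlm, prod_and_sum_iff_quadratic hlam.ne' hmu.ne' hy₀.ne',
      quadratic_eq_zero_iff_eq_quadraticRoot hmul hc hy₀]
    exact ⟨rfl, rfl⟩

end Hyperbola

theorem hyperbolas_intersect_uniquely (a11 a12 a21 a22 lam mu : ℝ)
    (hTr : a11 + a22 < 0) (hDet : 0 < a11 * a22 - a12 * a21)
    (h22 : 0 < a22) (hlam : 0 < lam) (hlm : lam < mu) :
    (∃! p : ℝ × ℝ, 0 < p.1 ∧ 0 < p.2 ∧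
      (a11 * a22 - a12 * a21) - a11 * lam * p.2 - a22 * lam * p.1 + lam ^ 2 * p.1 * p.2 = 0 ∧
      (a11 * a22 - a12 * a21) - a11 * mu * p.2 - a22 * mu * p.1 + mu ^ 2 * p.1 * p.2 = 0) ∧
    (∀ p : ℝ × ℝ, (0 < p.1 ∧ 0 < p.2 ∧
      (a11 * a22 - a12 * a21) - a11 * lam * p.2 - a22 * lam * p.1 + lam ^ 2 * p.1 * p.2 = 0 ∧
      (a11 * a22 - a12 * a21) - a11 * mu * p.2 - a22 * mu * p.1 + mu ^ 2 * p.1 * p.2 = 0) →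
      p.2 = ((a11 * a22 - a12 * a21) * (lam + mu) -
        Real.sqrt (((a11 * a22 - a12 * a21) * (lam + mu)) ^ 2 -
          4 * a11 * a22 * (a11 * a22 - a12 * a21) * lam * mu)) / (2 * a11 * lam * mu)) := by
  set D := a11 * a22 - a12 * a21
  have ha11 : a11 < 0 := by linarith
  have key := fun p ↦ pos_common_point_iff (p := p) ha11 h22 hDet hlam (hlam.trans hlm) hlm.ne
  have hroot : quadraticRoot (a11 * lam * mu) (-(D * (lam + mu))) (D * a22) =
      (D * (lam + mu) - √((D * (lam + mu)) ^ 2 - 4 * a11 * a22 * D * lam * mu)) /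
        (2 * a11 * lam * mu) := by
    rw [quadraticRoot, discrim]
    ring_nf
  rw [← hroot]
  exact ⟨⟨_, (key _).2 rfl, fun p hp ↦ (key p).1 hp⟩, fun p hp ↦ by rw [(key p).1 hp]⟩
end

section
/- Let A = !![a11, a12; a21, a22] be a real 2×2 matrix with Tr(A) < 0, det(A) > 0, a11 ≤ 0 and a22 ≤ 0. Then A is strongly stable: for all real numbers m1 ≥ 0 and m2 ≥ 0, every complex eigenvalue of the matrix A − diag(m1, m2) has strictly negative real part. -/
open Matrix Polynomial Real

lemma quad_root_re_neg (t d : ℝ) (ht : t < 0) (hd : 0 < d) (z : ℂ)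
    (h : z ^ 2 - (t : ℂ) * z + (d : ℂ) = 0) : z.re < 0 := by
  have h1 : z.re ^ 2 - z.im ^ 2 - t * z.re + d = 0 := by
    have := congrArg Complex.re h
    simpa [pow_two, Complex.mul_re, Complex.mul_im] using this
  have h2 : z.im * (2 * z.re - t) = 0 := by
    have := congrArg Complex.im h
    simp [pow_two, Complex.mul_re, Complex.mul_im] at this
    ring_nf
    ring_nf at this
    linarith
  by_contra hx
  push_neg at hx
  have hpos : 2 * z.re - t > 0 := by linarith
  have hy : z.im = 0 := by
    rcases mul_eq_zero.1 h2 with h | h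
    · exact h
    · linarith
  rw [hy] at h1
  nlinarith [sq_nonneg z.re, mul_nonneg hx (neg_nonneg.2 (le_of_lt ht))]

theorem strongly_stable_2x2 (a11 a12 a21 a22 : ℝ)
    (hTr : a11 + a22 < 0) (hDet : 0 < a11 * a22 - a12 * a21)
    (h11 : a11 ≤ 0) (h22 : a22 ≤ 0) :
    ∀ m1 m2 : ℝ, 0 ≤ m1 → 0 ≤ m2 → ∀ z : ℂ,
      (((!![a11, a12; a21, a22] - Matrix.diagonal ![m1, m2]).map
        (algebraMap ℝ ℂ)).charpoly).IsRoot z → z.re < 0 := by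
  intro m1 m2 hm1 hm2 z hz
  have hB : (!![a11, a12; a21, a22] - Matrix.diagonal ![m1, m2]).map
      (algebraMap ℝ ℂ) = !![((a11 - m1 : ℝ) : ℂ), ((a12 : ℝ) : ℂ);
        ((a21 : ℝ) : ℂ), ((a22 - m2 : ℝ) : ℂ)] := by
    ext i j
    fin_cases i <;> fin_cases j <;>
      simp [Matrix.diagonal, Complex.ofReal_sub, Matrix.vecHead, Matrix.vecTail]
  rw [hB] at hz
  have hcp : (!![((a11 - m1 : ℝ) : ℂ), ((a12 : ℝ) : ℂ);
        ((a21 : ℝ) : ℂ), ((a22 - m2 : ℝ) : ℂ)]).charpoly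
      = X ^ 2 - C (((a11 - m1 : ℝ) : ℂ) + ((a22 - m2 : ℝ) : ℂ)) * X
        + C (((a11 - m1 : ℝ) : ℂ) * ((a22 - m2 : ℝ) : ℂ) - ((a12 : ℝ) : ℂ) * ((a21 : ℝ) : ℂ)) := by
    rw [Matrix.charpoly, Matrix.det_fin_two]
    simp [charmatrix_apply_eq, charmatrix_apply_ne]
    ring
  rw [hcp] at hz
  have heval : z ^ 2 - (((a11 - m1) + (a22 - m2) : ℝ) : ℂ) * z
      + (((a11 - m1) * (a22 - m2) - a12 * a21 : ℝ) : ℂ) = 0 := by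
    have := hz
    simp [Polynomial.IsRoot] at this
    push_cast
    linear_combination this
  apply quad_root_re_neg _ _ _ _ _ heval
  · linarith
  · nlinarith
end

section
/- Let A = !![a11, a12; a21, a22] be a real 2×2 matrix with Tr(A) < 0, det(A) > 0, and (a11 > 0 or a22 > 0). Then A is excitable: every complex eigenvalue of A has strictly negative real part, yet there exist real numbers m1 ≥ 0 and m2 ≥ 0 such that A − diag(m1, m2) has a complex eigenvalue with strictly positive real part. -/
open Matrix Polynomial Real

/-! The characteristic roots of a real 2×2 matrix `M` solve `z² - tr M · z + det M = 0`. If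
`tr M < 0 < det M`, a root with `Re z ≥ 0` is forced to be real by the imaginary part of the
equation, `Im z · (2 Re z - tr M) = 0`, and then `z² - tr M · z + det M > 0`. Subtracting
`diag(0, m)` lowers the determinant by `m · a₁₁`, so when `a₁₁ > 0` a large `m` makes it negative,
and a monic real quadratic with negative constant term has a positive root. -/

theorem Matrix.det_fin_two_sub_diagonal {R : Type*} [CommRing R]
    (A : Matrix (Fin 2) (Fin 2) R) (m₁ m₂ : R) :
    (A - diagonal ![m₁, m₂]).det = A.det - m₂ * A 0 0 - m₁ * A 1 1 + m₁ * m₂ := by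
  simp only [det_fin_two, sub_apply, diagonal_apply_eq, diagonal_apply_ne _ zero_ne_one,
    diagonal_apply_ne _ one_ne_zero, cons_val_zero, cons_val_one, cons_val_fin_one, sub_zero]
  ring

theorem isRoot_charpoly_map_complex_iff (M : Matrix (Fin 2) (Fin 2) ℝ) (z : ℂ) :
    (M.map (algebraMap ℝ ℂ)).charpoly.IsRoot z ↔ z ^ 2 - M.trace * z + M.det = 0 := by
  rw [charpoly_map, IsRoot, eval_map_algebraMap, charpoly_fin_two]
  simp

theorem Complex.re_neg_of_sq_sub_mul_add_eq_zero {t d : ℝ} (ht : t < 0) (hd : 0 < d) {z : ℂ}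
    (hz : z ^ 2 - t * z + d = 0) : z.re < 0 := by
  have hre := congrArg Complex.re hz
  have him := congrArg Complex.im hz
  simp only [pow_two, Complex.add_re, Complex.sub_re, Complex.mul_re, Complex.ofReal_re,
    Complex.ofReal_im, Complex.add_im, Complex.sub_im, Complex.mul_im, Complex.zero_re,
    Complex.zero_im, zero_mul, sub_zero, add_zero] at hre him
  by_contra! hx
  have hy : z.im = 0 := by
    have : z.im * (2 * z.re - t) = 0 := by linarith
    exact (mul_eq_zero.mp this).resolve_right (by linarith)
  rw [hy] at hre
  nlinarith

theorem exists_pos_sq_sub_mul_add_eq_zero (t : ℝ) {d : ℝ} (hd : d < 0) :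
    ∃ x : ℝ, 0 < x ∧ x ^ 2 - t * x + d = 0 := by
  set s := √(t ^ 2 - 4 * d)
  have hs : s ^ 2 = t ^ 2 - 4 * d := sq_sqrt (by nlinarith)
  have ht : |t| < s := by
    rw [← sqrt_sq_eq_abs]
    exact sqrt_lt_sqrt (sq_nonneg t) (by linarith)
  refine ⟨(t + s) / 2, by linarith [neg_abs_le t], ?_⟩
  linear_combination hs / 4

theorem re_neg_of_isRoot_charpoly_map_complex (M : Matrix (Fin 2) (Fin 2) ℝ)
    (htr : M.trace < 0) (hdet : 0 < M.det) {z : ℂ}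
    (hz : (M.map (algebraMap ℝ ℂ)).charpoly.IsRoot z) : z.re < 0 :=
  Complex.re_neg_of_sq_sub_mul_add_eq_zero htr hdet ((isRoot_charpoly_map_complex_iff M z).1 hz)

theorem exists_isRoot_charpoly_map_complex_re_pos (M : Matrix (Fin 2) (Fin 2) ℝ)
    (hdet : M.det < 0) : ∃ z : ℂ, (M.map (algebraMap ℝ ℂ)).charpoly.IsRoot z ∧ 0 < z.re := by
  obtain ⟨x, hx, hroot⟩ := exists_pos_sq_sub_mul_add_eq_zero M.trace hdet
  refine ⟨x, (isRoot_charpoly_map_complex_iff M x).2 ?_, by simpa using hx⟩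
  exact_mod_cast hroot

theorem exists_det_sub_diagonal_neg (A : Matrix (Fin 2) (Fin 2) ℝ) (h : 0 < A 0 0 ∨ 0 < A 1 1) :
    ∃ m₁ m₂ : ℝ, 0 ≤ m₁ ∧ 0 ≤ m₂ ∧ (A - diagonal ![m₁, m₂]).det < 0 := by
  rcases h with h | h
  · refine ⟨0, |A.det| / A 0 0 + 1, le_rfl, by positivity, ?_⟩
    rw [det_fin_two_sub_diagonal, add_mul, div_mul_cancel₀ _ h.ne']
    linarith [le_abs_self A.det]
  · refine ⟨|A.det| / A 1 1 + 1, 0, by positivity, le_rfl, ?_⟩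
    rw [det_fin_two_sub_diagonal, add_mul, div_mul_cancel₀ _ h.ne']
    linarith [le_abs_self A.det]

theorem excitable_2x2 (a11 a12 a21 a22 : ℝ)
    (hTr : a11 + a22 < 0) (hDet : 0 < a11 * a22 - a12 * a21)
    (hExc : 0 < a11 ∨ 0 < a22) :
    (∀ z : ℂ, ((!![a11, a12; a21, a22].map (algebraMap ℝ ℂ)).charpoly).IsRoot z → z.re < 0) ∧
    (∃ m1 m2 : ℝ, 0 ≤ m1 ∧ 0 ≤ m2 ∧ ∃ z : ℂ,
      (((!![a11, a12; a21, a22] - Matrix.diagonal ![m1, m2]).map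
        (algebraMap ℝ ℂ)).charpoly).IsRoot z ∧ 0 < z.re) := by
  refine ⟨fun z ↦ re_neg_of_isRoot_charpoly_map_complex _ ?_ ?_, ?_⟩
  · rwa [trace_fin_two_of]
  · rwa [det_fin_two_of]
  · obtain ⟨m1, m2, hm1, hm2, hdet⟩ := exists_det_sub_diagonal_neg !![a11, a12; a21, a22] hExc
    exact ⟨m1, m2, hm1, hm2, exists_isRoot_charpoly_map_complex_re_pos _ hdet⟩
end

section
/- Let A = (a_ij) be a real 3×3 matrix. Set c1 = −Tr(A), c3 = −det(A), M12 = a11·a22 − a12·a21, M13 = a11·a33 − a13·a31, M23 = a22·a33 − a23·a32, and c2 = M12 + M13 + M23. If c1 > 0, c3 > 0, c1·c2 − c3 > 0, a11 ≤ 0, a22 ≤ 0, a33 ≤ 0, M12 ≥ 0, M13 ≥ 0 and M23 ≥ 0, then A is strongly stable: for all real numbers m1, m2, m3 ≥ 0, every complex eigenvalue of A − diag(m1, m2, m3) has strictly negative real part. -/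
open Matrix Polynomial Real

theorem routh_hurwitz_cubic (c1 c2 c3 : ℝ) (h1 : 0 < c1) (h3 : 0 < c3)
    (h : 0 < c1 * c2 - c3) (z : ℂ)
    (hz : z ^ 3 + (c1 : ℂ) * z ^ 2 + (c2 : ℂ) * z + (c3 : ℂ) = 0) : z.re < 0 := by
  have hc2 : 0 < c2 := by nlinarith
  by_contra hx
  push_neg at hx
  have hre := congrArg Complex.re hz
  have him := congrArg Complex.im hz
  simp only [Complex.add_re, Complex.add_im, Complex.mul_re, Complex.mul_im,
    Complex.ofReal_re, Complex.ofReal_im, pow_succ, pow_zero, Complex.one_re,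
    Complex.one_im, Complex.zero_re, Complex.zero_im] at hre him
  set x := z.re
  set y := z.im
  have hre' : x ^ 3 - 3 * x * y ^ 2 + c1 * (x ^ 2 - y ^ 2) + c2 * x + c3 = 0 := by
    linear_combination hre
  have him' : y * (3 * x ^ 2 - y ^ 2 + 2 * c1 * x + c2) = 0 := by
    linear_combination him
  rcases eq_or_ne y 0 with hy | hy
  · rw [hy] at hre'
    nlinarith
  · have hyy : y ^ 2 = 3 * x ^ 2 + 2 * c1 * x + c2 :=
      by have := (mul_eq_zero.mp him').resolve_left hy; linarith
    rw [hyy] at hre'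
    nlinarith [mul_nonneg hx h1.le, mul_nonneg hx hc2.le, mul_nonneg (mul_nonneg hx hx) hx,
      mul_nonneg (mul_nonneg hx hx) h1.le, mul_nonneg hx (mul_nonneg h1.le h1.le)]

theorem charpoly_fin3 (b11 b12 b13 b21 b22 b23 b31 b32 b33 : ℝ) :
    (!![b11, b12, b13; b21, b22, b23; b31, b32, b33] : Matrix (Fin 3) (Fin 3) ℝ).charpoly
      = X ^ 3 + C (-(b11 + b22 + b33)) * X ^ 2
        + C ((b11 * b22 - b12 * b21) + (b11 * b33 - b13 * b31) + (b22 * b33 - b23 * b32)) * X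
        + C (-(b11 * (b22 * b33 - b23 * b32) - b12 * (b21 * b33 - b23 * b31)
            + b13 * (b21 * b32 - b22 * b31))) := by
  have hm : charmatrix (!![b11, b12, b13; b21, b22, b23; b31, b32, b33] : Matrix (Fin 3) (Fin 3) ℝ)
      = !![X - C b11, -C b12, -C b13; -C b21, X - C b22, -C b23; -C b31, -C b32, X - C b33] := by
    ext i j
    fin_cases i <;> fin_cases j <;>
      simp [charmatrix_apply, Matrix.diagonal]
  rw [Matrix.charpoly, hm, Matrix.det_fin_three]
  simp
  ring

theorem strongly_stable_3x3 (a11 a12 a13 a21 a22 a23 a31 a32 a33 : ℝ)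
    (A : Matrix (Fin 3) (Fin 3) ℝ)
    (hA : A = !![a11, a12, a13; a21, a22, a23; a31, a32, a33])
    (hc1 : 0 < -(a11 + a22 + a33))
    (hc3 : 0 < -A.det)
    (hc1c2c3 : 0 < (-(a11 + a22 + a33)) *
        ((a11 * a22 - a12 * a21) + (a11 * a33 - a13 * a31) + (a22 * a33 - a23 * a32))
      - (-A.det))
    (h11 : a11 ≤ 0) (h22 : a22 ≤ 0) (h33 : a33 ≤ 0)
    (hM12 : 0 ≤ a11 * a22 - a12 * a21)
    (hM13 : 0 ≤ a11 * a33 - a13 * a31)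
    (hM23 : 0 ≤ a22 * a33 - a23 * a32) :
    ∀ m1 m2 m3 : ℝ, 0 ≤ m1 → 0 ≤ m2 → 0 ≤ m3 → ∀ z : ℂ,
      (((A - Matrix.diagonal ![m1, m2, m3]).map (algebraMap ℝ ℂ)).charpoly).IsRoot z →
        z.re < 0 := by
  subst hA
  intro m1 m2 m3 hm1 hm2 hm3 z hz
  simp [Matrix.det_fin_three] at hc3 hc1c2c3
  have hB : (!![a11, a12, a13; a21, a22, a23; a31, a32, a33] : Matrix (Fin 3) (Fin 3) ℝ)
      - Matrix.diagonal ![m1, m2, m3]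
      = !![a11 - m1, a12, a13; a21, a22 - m2, a23; a31, a32, a33 - m3] := by
    ext i j
    fin_cases i <;> fin_cases j <;> simp [Matrix.diagonal]
  rw [hB, Matrix.charpoly_map, charpoly_fin3] at hz
  rw [Polynomial.IsRoot.def, Polynomial.eval_map] at hz
  simp only [Polynomial.eval₂_add, Polynomial.eval₂_mul, Polynomial.eval₂_pow,
    Polynomial.eval₂_C, Polynomial.eval₂_X, Complex.coe_algebraMap] at hz
  have hn1 : 0 ≤ -a11 := by linarith
  have hn2 : 0 ≤ -a22 := by linarith
  have hn3 : 0 ≤ -a33 := by linarith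
  have hΔ2 : 0 ≤ (m1 * m2 + m1 * (-a22) + m2 * (-a11))
      + (m1 * m3 + m1 * (-a33) + m3 * (-a11))
      + (m2 * m3 + m2 * (-a33) + m3 * (-a22)) := by
    have := mul_nonneg hm1 hm2
    have := mul_nonneg hm1 hm3
    have := mul_nonneg hm2 hm3
    have := mul_nonneg hm1 hn2
    have := mul_nonneg hm2 hn1
    have := mul_nonneg hm1 hn3
    have := mul_nonneg hm3 hn1
    have := mul_nonneg hm2 hn3
    have := mul_nonneg hm3 hn2
    linarith
  refine routh_hurwitz_cubic (-(a11 - m1 + (a22 - m2) + (a33 - m3)))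
    (((a11 - m1) * (a22 - m2) - a12 * a21) + ((a11 - m1) * (a33 - m3) - a13 * a31)
      + ((a22 - m2) * (a33 - m3) - a23 * a32))
    (-((a11 - m1) * ((a22 - m2) * (a33 - m3) - a23 * a32)
      - a12 * (a21 * (a33 - m3) - a23 * a31)
      + a13 * (a21 * a32 - (a22 - m2) * a31))) ?_ ?_ ?_ z (by linear_combination hz)
  · linarith
  · nlinarith [hc3, mul_nonneg hm1 hM23, mul_nonneg hm2 hM13, mul_nonneg hm3 hM12,
      mul_nonneg (mul_nonneg hm1 hm2) hn3, mul_nonneg (mul_nonneg hm1 hm3) hn2,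
      mul_nonneg (mul_nonneg hm2 hm3) hn1, mul_nonneg (mul_nonneg hm1 hm2) hm3]
  · linarith [hc1c2c3, mul_nonneg hm1 hM12, mul_nonneg hm2 hM12, mul_nonneg hm1 hM13,
      mul_nonneg hm3 hM13, mul_nonneg hm2 hM23, mul_nonneg hm3 hM23,
      mul_nonneg hc1.le hΔ2,
      mul_nonneg (mul_nonneg hm1 hm2) hm3,
      mul_nonneg (mul_nonneg hm1 hm1) hm2, mul_nonneg (mul_nonneg hm1 hm1) hm3,
      mul_nonneg (mul_nonneg hm1 hm2) hm2, mul_nonneg (mul_nonneg hm2 hm2) hm3,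
      mul_nonneg (mul_nonneg hm1 hm3) hm3, mul_nonneg (mul_nonneg hm2 hm3) hm3,
      mul_nonneg (mul_nonneg hm1 hm2) hn3, mul_nonneg (mul_nonneg hm1 hm3) hn2,
      mul_nonneg (mul_nonneg hm2 hm3) hn1,
      mul_nonneg (mul_nonneg hm1 hm1) hn2, mul_nonneg (mul_nonneg hm1 hm1) hn3,
      mul_nonneg (mul_nonneg hm2 hm2) hn1, mul_nonneg (mul_nonneg hm2 hm2) hn3,
      mul_nonneg (mul_nonneg hm3 hm3) hn1, mul_nonneg (mul_nonneg hm3 hm3) hn2,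
      mul_nonneg (mul_nonneg hm1 hm2) hn1, mul_nonneg (mul_nonneg hm1 hm3) hn1,
      mul_nonneg (mul_nonneg hm1 hm2) hn2, mul_nonneg (mul_nonneg hm2 hm3) hn2,
      mul_nonneg (mul_nonneg hm1 hm3) hn3, mul_nonneg (mul_nonneg hm2 hm3) hn3]
end

section
/- Let A, K, a, b, E, δ be positive real numbers with δ ≥ b/E and a ≥ 1, and set γ = (b/E)·K/(1/E + K). Define F1(x, y) = −A·(x + K)·x/K − (a/E)·(x + K)·y/(1/E + x + K) and F2(x, y) = −((γ + δ·y)/(1 + y))·y + (b/E)·(x + K)·y/(1/E + x + K). Then for all x ≥ 0 and y > 0, the derivative of V(x,y) = (b/(E·K))·x² + (1/E + K)·y² along the vector field (F1, F2) is strictly negative: 2·(b/(E·K))·x·F1(x,y) + 2·(1/E + K)·y·F2(x,y) < 0. -/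
/-! Write `c = b/E`, `e = 1/E`, `P = e + K`, `D = P + x` and `t = x / D ∈ [0, 1]`. The relation
`γ = c K / P` gives `P (c (x + K)/D - γ) = c e t`, and `(γ + δ y)/(1 + y) = γ + (δ - γ) y/(1 + y)`,
so the derivative of `V` becomes
`-(2bA/(EK²))(x + K)x² - 2ce (a(x + K)/K) t y + 2ce t y² - 2P(δ - γ) y³/(1 + y)`.
Since `a(x + K)/K ≥ 1` and `P(δ - γ) ≥ ce` (from `δ ≥ c`), this is at most
`2ce (t y² - t y - y³/(1 + y))`, which is negative for every `t ∈ [0, 1]` and `y > 0`. -/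

lemma lyapunov_derivative_eq {A K a b E δ γ P D x y : ℝ} (hE : E ≠ 0) (hK : K ≠ 0)
    (hD : D ≠ 0) (hy : 1 + y ≠ 0) :
    2 * (b / (E * K)) * x * (-(A * (x + K) * x / K) - (a / E) * (x + K) * y / D) +
      2 * P * y * (-((γ + δ * y) / (1 + y)) * y + (b / E) * (x + K) * y / D) =
      -(2 * b * A / (E * K ^ 2) * (x + K) * x ^ 2)
        - 2 * (b / E * (1 / E)) * (a * (x + K) / K * (x / D * y))
        + 2 * y ^ 2 * (P * ((b / E) * (x + K) / D - γ))
        - 2 * (P * (δ - γ)) * (y ^ 3 / (1 + y)) := by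
  field_simp
  ring

lemma holling_response_sub_eq {c e K x : ℝ} (hP : e + K ≠ 0) (hD : e + x + K ≠ 0) :
    (e + K) * (c * (x + K) / (e + x + K) - c * K / (e + K)) = c * e * (x / (e + x + K)) := by
  field_simp
  ring

lemma mul_le_mul_sub_div {c e K δ : ℝ} (hP : 0 < e + K) (hc : c ≤ δ) :
    c * e ≤ (e + K) * (δ - c * K / (e + K)) := by
  rw [mul_sub, mul_div_cancel₀ _ hP.ne']
  nlinarith [mul_le_mul_of_nonneg_left hc hP.le]

lemma mul_sq_lt_mul_add_cube_div {t y : ℝ} (ht₀ : 0 ≤ t) (ht₁ : t ≤ 1) (hy : 0 < y) :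
    t * y ^ 2 < t * y + y ^ 3 / (1 + y) := by
  rw [← sub_lt_iff_lt_add', lt_div_iff₀ (by linarith)]
  -- `(t y² - t y)(1 + y) - y³ = -((1 - t) y³ + t y)`, and `(1 - t) y³ + t y ≥ min y y³ > 0`.
  rcases le_total y 1 with h | h
  · nlinarith [pow_le_pow_of_le_one hy.le h (by norm_num : 1 ≤ 3), pow_pos hy 3]
  · have hcube : y ≤ y ^ 3 := le_self_pow₀ h (by norm_num)
    nlinarith [mul_nonneg (sub_nonneg.2 ht₁) (sub_nonneg.2 hcube)]

theorem lyapunov_derivative_negative_general (A K a b E δ γ : ℝ)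
    (hA : 0 < A) (hK : 0 < K) (hb : 0 < b) (hE : 0 < E)
    (hδE : b / E ≤ δ) (ha : 1 ≤ a)
    (hγ : γ = (b / E) * K / (1 / E + K)) :
    ∀ x y : ℝ, 0 ≤ x → 0 < y →
      2 * (b / (E * K)) * x *
        (-(A * (x + K) * x / K) - (a / E) * (x + K) * y / (1 / E + x + K)) +
      2 * (1 / E + K) * y *
        (-((γ + δ * y) / (1 + y)) * y + (b / E) * (x + K) * y / (1 / E + x + K)) < 0 := by
  intro x y hx hy
  have hP : 0 < 1 / E + K := by positivity
  have hD : 0 < 1 / E + x + K := by positivity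
  rw [lyapunov_derivative_eq hE.ne' hK.ne' hD.ne' (by positivity), hγ,
    holling_response_sub_eq hP.ne' hD.ne']
  set t := x / (1 / E + x + K)
  have hce : 0 < b / E * (1 / E) := by positivity
  have ht₁ : t ≤ 1 := (div_le_one hD).2 (by linarith)
  have hprey : t * y ≤ a * (x + K) / K * (t * y) :=
    le_mul_of_one_le_left (by positivity) ((one_le_div hK).2 (by nlinarith))
  have hpred := mul_le_mul_of_nonneg_right (mul_le_mul_sub_div hP hδE)
    (by positivity : 0 ≤ y ^ 3 / (1 + y))
  have hkey := mul_lt_mul_of_pos_left (mul_sq_lt_mul_add_cube_div (by positivity) ht₁ hy) hce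
  have hfirst : 0 ≤ 2 * b * A / (E * K ^ 2) * (x + K) * x ^ 2 := by positivity
  linarith [mul_le_mul_of_nonneg_left hprey hce.le]

theorem lyapunov_derivative_negative (A K a b E δ γ : ℝ)
    (hA : 0 < A) (hK : 0 < K) (ha0 : 0 < a) (hb : 0 < b) (hE : 0 < E) (hδ : 0 < δ)
    (hδE : b / E ≤ δ) (ha : 1 ≤ a)
    (hγ : γ = (b / E) * K / (1 / E + K)) :
    ∀ x y : ℝ, 0 ≤ x → 0 < y →
      2 * (b / (E * K)) * x *
        (-(A * (x + K) * x / K) - (a / E) * (x + K) * y / (1 / E + x + K)) +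
      2 * (1 / E + K) * y *
        (-((γ + δ * y) / (1 + y)) * y + (b / E) * (x + K) * y / (1 / E + x + K)) < 0 :=
  lyapunov_derivative_negative_general A K a b E δ γ hA hK hb hE hδE ha hγ
end

section
/- Let A, K, E, a, b, γ, δ be positive real numbers, set r = A/a and u* = (K·E − 1)/(2·E), and suppose: (i) 0 < r < 1/2; (ii) K·E > max{8, ((8 − r) + √(r² + 16·r + 48))/(2·(1/2 − r))}; (iii) 0 < γ/δ < min{1/2, 1/2 − 2·A·u*/(a·K), A·E·K/(2·(A·E·K + 2·a)), r·((1/2 − r)·(K·E)² + (r − 8)·K·E + 8)/(r·(K·E)² + 4·(1/2 − r)·K·E + 4·r)}; (iv) max{2·E·γ, 2·E·δ − 2·E·(δ − γ)/(4·A·u*/(a·K) + 1)} < b < min{E·δ, E·(4·a·γ + A·E·K·δ)/(4·a + A·E·K)}. Then: 2·E·γ < b, K·E > 3, 2·A·(K·E − 1)/(a·K·E) < (b − 2·E·γ)/(2·E·δ − b), and A·K·E/(4·a) > (b − γ·E)/(E·δ − b). -/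
open Real

theorem parameter_conditions_imply_ord (A K E a b γ δ r ustar : ℝ)
    (hA : 0 < A) (hK : 0 < K) (hE : 0 < E) (ha : 0 < a)
    (hb : 0 < b) (hγ : 0 < γ) (hδ : 0 < δ)
    (hr : r = A / a) (hustar : ustar = (K * E - 1) / (2 * E))
    (hi : 0 < r ∧ r < 1 / 2)
    (hii : K * E > max 8 (((8 - r) + Real.sqrt (r ^ 2 + 16 * r + 48)) / (2 * (1 / 2 - r))))
    (hiii : 0 < γ / δ ∧ γ / δ <
      min (min (1 / 2) (1 / 2 - 2 * A * ustar / (a * K)))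
        (min (A * E * K / (2 * (A * E * K + 2 * a)))
          (r * ((1 / 2 - r) * (K * E) ^ 2 + (r - 8) * (K * E) + 8) /
            (r * (K * E) ^ 2 + 4 * (1 / 2 - r) * (K * E) + 4 * r))))
    (hiv : max (2 * E * γ) (2 * E * δ - 2 * E * (δ - γ) / (4 * A * ustar / (a * K) + 1)) < b ∧
      b < min (E * δ) (E * (4 * a * γ + A * E * K * δ) / (4 * a + A * E * K))) :
    2 * E * γ < b ∧ K * E > 3 ∧
    2 * A * (K * E - 1) / (a * K * E) < (b - 2 * E * γ) / (2 * E * δ - b) ∧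
    A * K * E / (4 * a) > (b - γ * E) / (E * δ - b) := by
  obtain ⟨hiv1, hiv2⟩ := hiv
  rw [max_lt_iff] at hiv1
  rw [lt_min_iff] at hiv2
  obtain ⟨hb1, hb2⟩ := hiv1
  obtain ⟨hb3, hb4⟩ := hiv2
  have hKE : K * E > 8 := lt_of_le_of_lt (le_max_left _ _) hii
  refine ⟨hb1, by linarith, ?_, ?_⟩
  · -- conclusion 3
    set G := 2 * A * (K * E - 1) / (a * K * E) with hG
    have hGL : 4 * A * ustar / (a * K) = G := by
      rw [hustar, hG]
      field_simp
      ring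
    rw [hGL] at hb2
    have hGpos : 0 < G := by
      apply div_pos
      · nlinarith
      · positivity
    have hD : 0 < 2 * E * δ - b := by nlinarith [hb3]
    have hkey : (2 * E * δ - b) * (G + 1) < 2 * E * (δ - γ) := by
      have h1 : 2 * E * δ - b < 2 * E * (δ - γ) / (G + 1) := by linarith
      have h2 : 0 < G + 1 := by linarith
      calc (2 * E * δ - b) * (G + 1) < (2 * E * (δ - γ) / (G + 1)) * (G + 1) := by
            exact mul_lt_mul_of_pos_right h1 h2
        _ = 2 * E * (δ - γ) := by field_simp
    rw [lt_div_iff₀ hD]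
    nlinarith [hkey]
  · -- conclusion 4
    have hEδ : 0 < E * δ - b := by linarith
    rw [gt_iff_lt, div_lt_div_iff₀ hEδ (by positivity : (0:ℝ) < 4 * a)]
    have hden : 0 < 4 * a + A * E * K := by positivity
    have := (lt_div_iff₀ hden).mp hb4
    nlinarith
end

section
/- Let A, K, E, a, b, γ, δ be positive real numbers with 0 < γ < δ, 2·E·γ < b < E·δ and K·E > 3. Set c = (b − γ·E)/(b − δ·E), d = γ/(b − γ·E), e = δ/(b − δ·E), u* = (K·E − 1)/(2·E), f(u) = (A/(a·K))·(K − u)·(1 + E·u), and g(u) = −c·(u − d)/(u − e). Assume f(1/E) < g(1/E) and A·K·E/(4·a) > −c. Then there exist u1 ∈ (d, 1/E), u2 ∈ (1/E, u*) and u3 ∈ (u*, K) such that f(ui) = g(ui) for i = 1, 2, 3; consequently (ui, f(ui)) are three distinct equilibria of the kinetic predator-prey system with positive coordinates. -/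
/-!
On `(d, K)` the difference `f - g` is continuous (the pole `e` of `g` lies to the left of `d`) and
alternates in sign at `d < 1/E < u* < K`: positive at `d` since `g d = 0`, negative at `1/E` by
assumption, positive at the vertex `u*` since there `f ≥ A K E / (4a) > -c > g`, and negative at `K`
since `f K = 0 < g K`. The intermediate value theorem gives one crossing in each gap. At a crossing
`v = f u = g u` is positive because `g` is positive right of `d`, and after cancelling the factors
`u` and `v` the two equilibrium equations are exactly `v = f u` and `v = g u`.
-/

open Set

theorem exists_three_zeros_of_sign_changes {h : ℝ → ℝ} {x₀ x₁ x₂ x₃ : ℝ}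
    (h01 : x₀ ≤ x₁) (h12 : x₁ ≤ x₂) (h23 : x₂ ≤ x₃) (hh : ContinuousOn h (Icc x₀ x₃))
    (h₀ : 0 < h x₀) (h₁ : h x₁ < 0) (h₂ : 0 < h x₂) (h₃ : h x₃ < 0) :
    ∃ y₁ ∈ Ioo x₀ x₁, ∃ y₂ ∈ Ioo x₁ x₂, ∃ y₃ ∈ Ioo x₂ x₃, h y₁ = 0 ∧ h y₂ = 0 ∧ h y₃ = 0 := by
  obtain ⟨y₁, hy₁, hzero₁⟩ := intermediate_value_Ioo' h01
    (hh.mono (Icc_subset_Icc le_rfl (h12.trans h23))) ⟨h₁, h₀⟩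
  obtain ⟨y₂, hy₂, hzero₂⟩ := intermediate_value_Ioo h12
    (hh.mono (Icc_subset_Icc h01 h23)) ⟨h₁, h₂⟩
  obtain ⟨y₃, hy₃, hzero₃⟩ := intermediate_value_Ioo' h23
    (hh.mono (Icc_subset_Icc (h01.trans h12) le_rfl)) ⟨h₃, h₂⟩
  exact ⟨y₁, hy₁, y₂, hy₂, y₃, hy₃, hzero₁, hzero₂, hzero₃⟩

noncomputable section

def preyNullcline (A K E a u : ℝ) : ℝ := A / (a * K) * (K - u) * (1 + E * u)

def predatorNullcline (c d e u : ℝ) : ℝ := -c * (u - d) / (u - e)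

end

section PreyNullcline

variable {A K E a u : ℝ}

@[simp]
theorem preyNullcline_self : preyNullcline A K E a K = 0 := by
  simp [preyNullcline]

theorem continuous_preyNullcline : Continuous (preyNullcline A K E a) := by
  unfold preyNullcline
  fun_prop

theorem preyNullcline_pos (hA : 0 < A) (ha : 0 < a) (hK : 0 < K) (huK : u < K)
    (hu : 0 < 1 + E * u) : 0 < preyNullcline A K E a u := by
  unfold preyNullcline
  have : 0 < K - u := sub_pos.mpr huK
  positivity

theorem le_preyNullcline_vertex (hA : 0 < A) (ha : 0 < a) (hK : 0 < K) (hE : 0 < E) :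
    A * K * E / (4 * a) ≤ preyNullcline A K E a ((K * E - 1) / (2 * E)) := by
  have hvertex : preyNullcline A K E a ((K * E - 1) / (2 * E))
      = A * (K * E + 1) ^ 2 / (4 * a * (K * E)) := by
    unfold preyNullcline
    field_simp
    ring
  rw [hvertex, div_le_div_iff₀ (by positivity) (by positivity)]
  nlinarith [mul_pos (mul_pos hA ha) (mul_pos hK hE), mul_pos hA ha]

theorem prey_rate_eq_zero (hK : K ≠ 0) (ha : a ≠ 0) (hu : 1 + E * u ≠ 0) :
    A * u * (1 - u / K) - a * u * preyNullcline A K E a u / (1 + E * u) = 0 := by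
  rw [sub_eq_zero, eq_div_iff hu, preyNullcline]
  field_simp

end PreyNullcline

section PredatorNullcline

variable {b γ δ E c d e u v : ℝ}

@[simp]
theorem predatorNullcline_self : predatorNullcline c d e d = 0 := by
  simp [predatorNullcline]

theorem continuousOn_predatorNullcline : ContinuousOn (predatorNullcline c d e) (Ioi e) := by
  unfold predatorNullcline
  exact ContinuousOn.div (by fun_prop) (by fun_prop) fun u hu => (sub_pos.mpr hu).ne'

theorem predatorNullcline_pos (hc : c < 0) (hed : e < d) (hdu : d < u) :
    0 < predatorNullcline c d e u := by
  unfold predatorNullcline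
  have : 0 < -c := neg_pos.mpr hc
  have : 0 < u - d := sub_pos.mpr hdu
  have : 0 < u - e := by linarith
  positivity

theorem predatorNullcline_lt (hc : c < 0) (hed : e < d) (hdu : d < u) :
    predatorNullcline c d e u < -c := by
  unfold predatorNullcline
  rw [div_lt_iff₀ (by linarith)]
  nlinarith

/-- `v = g u` is `(γ + δ v)(1 + E u) = b u (1 + v)` solved for `v`. -/
theorem predator_rate_eq_zero (hbγ : b - γ * E ≠ 0) (hbδ : b - δ * E ≠ 0)
    (hc : c = (b - γ * E) / (b - δ * E)) (hd : d = γ / (b - γ * E)) (he : e = δ / (b - δ * E))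
    (hue : u ≠ e) (hv : 1 + v ≠ 0) (hu : 1 + E * u ≠ 0) (hvg : v = predatorNullcline c d e u) :
    -((γ + δ * v) / (1 + v)) * v + b * u * v / (1 + E * u) = 0 := by
  have hcross : v * (u - e) = -c * (u - d) := by
    rw [hvg, predatorNullcline, div_mul_cancel₀ _ (sub_ne_zero.mpr hue)]
  have hsolved : v * ((b - δ * E) * u - δ) = γ - (b - γ * E) * u := by
    have hdenom : (b - δ * E) * u - δ = (b - δ * E) * (u - e) := by rw [he]; field_simp
    have hnumer : -c * (u - d) * (b - δ * E) = γ - (b - γ * E) * u := by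
      rw [hc, hd, mul_comm, ← mul_assoc, mul_neg, mul_div_cancel₀ _ hbδ, neg_mul, mul_sub,
        mul_div_cancel₀ _ hbγ]
      ring
    rw [hdenom, ← hnumer, ← hcross]; ring
  rw [neg_mul, div_mul_eq_mul_div, ← sub_eq_neg_add, sub_eq_zero, div_eq_div_iff hu hv]
  linear_combination v * hsolved

end PredatorNullcline

theorem exists_three_nullcline_crossings {A K E a c d e : ℝ} (hA : 0 < A) (hK : 0 < K)
    (hE : 0 < E) (ha : 0 < a) (hKE : 3 < K * E) (hc : c < 0) (hed : e < d) (hd : 0 ≤ d)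
    (hdE : d < 1 / E) (hcross : preyNullcline A K E a (1 / E) < predatorNullcline c d e (1 / E))
    (hvertex : -c < A * K * E / (4 * a)) :
    ∃ u₁ ∈ Ioo d (1 / E), ∃ u₂ ∈ Ioo (1 / E) ((K * E - 1) / (2 * E)),
      ∃ u₃ ∈ Ioo ((K * E - 1) / (2 * E)) K,
        preyNullcline A K E a u₁ = predatorNullcline c d e u₁ ∧
        preyNullcline A K E a u₂ = predatorNullcline c d e u₂ ∧
        preyNullcline A K E a u₃ = predatorNullcline c d e u₃ := by
  set ustar := (K * E - 1) / (2 * E)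
  have hEu : 1 / E < ustar := by
    rw [div_lt_div_iff₀ hE (by positivity)]
    nlinarith
  have huK : ustar < K := by
    rw [div_lt_iff₀ (by positivity)]
    nlinarith
  have hcont : ContinuousOn (fun u => preyNullcline A K E a u - predatorNullcline c d e u)
      (Icc d K) :=
    continuous_preyNullcline.continuousOn.sub
      (continuousOn_predatorNullcline.mono fun u hu => hed.trans_le hu.1)
  obtain ⟨u₁, hu₁, u₂, hu₂, u₃, hu₃, h₁, h₂, h₃⟩ :=
    exists_three_zeros_of_sign_changes hdE.le hEu.le huK.le hcont
      (by simpa using preyNullcline_pos hA ha hK (hdE.trans (hEu.trans huK)) (by positivity))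
      (sub_neg.mpr hcross)
      (sub_pos.mpr ((predatorNullcline_lt hc hed (hdE.trans hEu)).trans
        (hvertex.trans_le (le_preyNullcline_vertex hA ha hK hE))))
      (by simpa using predatorNullcline_pos hc hed (hdE.trans (hEu.trans huK)))
  exact ⟨u₁, hu₁, u₂, hu₂, u₃, hu₃, sub_eq_zero.mp h₁, sub_eq_zero.mp h₂, sub_eq_zero.mp h₃⟩

theorem positive_equilibrium_of_nullcline_crossing {A K E a b γ δ c d e u : ℝ} (hK : K ≠ 0)
    (ha : a ≠ 0) (hE : 0 ≤ E) (hbγ : b - γ * E ≠ 0) (hbδ : b - δ * E ≠ 0)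
    (hc : c = (b - γ * E) / (b - δ * E)) (hd : d = γ / (b - γ * E)) (he : e = δ / (b - δ * E))
    (hc0 : c < 0) (hed : e < d) (hd0 : 0 ≤ d) (hdu : d < u)
    (hfg : preyNullcline A K E a u = predatorNullcline c d e u) :
    0 < u ∧ 0 < preyNullcline A K E a u ∧
      A * u * (1 - u / K) - a * u * preyNullcline A K E a u / (1 + E * u) = 0 ∧
      -((γ + δ * preyNullcline A K E a u) / (1 + preyNullcline A K E a u)) *
          preyNullcline A K E a u +
        b * u * preyNullcline A K E a u / (1 + E * u) = 0 := by
  have hu : 0 < u := hd0.trans_lt hdu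
  have hv : 0 < preyNullcline A K E a u := hfg ▸ predatorNullcline_pos hc0 hed hdu
  have hEu : 0 < 1 + E * u := by positivity
  exact ⟨hu, hv, prey_rate_eq_zero hK ha hEu.ne',
    predator_rate_eq_zero hbγ hbδ hc hd he (hed.trans hdu).ne' (by positivity) hEu.ne' hfg⟩

theorem three_equilibria_exist (A K E a b γ δ c d e ustar : ℝ)
    (f g : ℝ → ℝ)
    (hA : 0 < A) (hK : 0 < K) (hE : 0 < E) (ha : 0 < a)
    (hγ : 0 < γ) (hγδ : γ < δ)
    (hb1 : 2 * E * γ < b) (hb2 : b < E * δ) (hKE : K * E > 3)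
    (hc : c = (b - γ * E) / (b - δ * E))
    (hd : d = γ / (b - γ * E))
    (he : e = δ / (b - δ * E))
    (hustar : ustar = (K * E - 1) / (2 * E))
    (hf : f = fun u => (A / (a * K)) * (K - u) * (1 + E * u))
    (hg : g = fun u => -c * (u - d) / (u - e))
    (hcross : f (1 / E) < g (1 / E))
    (hvertex : A * K * E / (4 * a) > -c) :
    ∃ u1 u2 u3 : ℝ,
      u1 ∈ Ioo d (1 / E) ∧ u2 ∈ Ioo (1 / E) ustar ∧ u3 ∈ Ioo ustar K ∧
      f u1 = g u1 ∧ f u2 = g u2 ∧ f u3 = g u3 ∧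
      u1 ≠ u2 ∧ u1 ≠ u3 ∧ u2 ≠ u3 ∧
      (∀ u ∈ ({u1, u2, u3} : Set ℝ),
        0 < u ∧ 0 < f u ∧
        A * u * (1 - u / K) - a * u * (f u) / (1 + E * u) = 0 ∧
        -((γ + δ * (f u)) / (1 + f u)) * (f u) + b * u * (f u) / (1 + E * u) = 0) := by
  have hbγ : 0 < b - γ * E := by nlinarith
  have hbδ : b - δ * E < 0 := by linarith
  have hc0 : c < 0 := hc ▸ div_neg_of_pos_of_neg hbγ hbδ
  have hd0 : 0 < d := hd ▸ div_pos hγ hbγ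
  have hed : e < d := (he ▸ div_neg_of_pos_of_neg (hγ.trans hγδ) hbδ).trans hd0
  have hdE : d < 1 / E := by
    rw [hd, div_lt_div_iff₀ hbγ hE]
    nlinarith
  replace hf : f = preyNullcline A K E a := hf
  replace hg : g = predatorNullcline c d e := hg
  subst hf hg hustar
  obtain ⟨u₁, hu₁, u₂, hu₂, u₃, hu₃, h₁, h₂, h₃⟩ :=
    exists_three_nullcline_crossings hA hK hE ha hKE hc0 hed hd0.le hdE hcross hvertex
  have hequilibrium := fun u (hdu : d < u) =>
    positive_equilibrium_of_nullcline_crossing (A := A) hK.ne' ha.ne' hE.le hbγ.ne' hbδ.ne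
      hc hd he hc0 hed hd0.le hdu
  refine ⟨u₁, u₂, u₃, hu₁, hu₂, hu₃, h₁, h₂, h₃, (hu₁.2.trans hu₂.1).ne,
    (hu₁.2.trans (hu₂.1.trans (hu₂.2.trans hu₃.1))).ne, (hu₂.2.trans hu₃.1).ne, ?_⟩
  rintro u (rfl | rfl | rfl)
  · exact hequilibrium u hu₁.1 h₁
  · exact hequilibrium u (hdE.trans hu₂.1) h₂
  · exact hequilibrium u (hdE.trans (hu₂.1.trans (hu₂.2.trans hu₃.1))) h₃
end

section
/- Let A = !![a11, a12; a21, a22] be a real 2×2 matrix with Tr(A) < 0, det(A) > 0 and a22 > 0. Let λ > 0 and let d2 satisfy 0 < d2 < a22/λ, and set d1* = (a11·λ·d2 − det(A))/(λ·(λ·d2 − a22)). Suppose ρ : ℝ → ℝ is differentiable at d1*, ρ(d1*) = 0, and for all t in some neighborhood of d1*, ρ(t)² − (Tr(A) − λ·(t + d2))·ρ(t) + det(A − λ·diag(t, d2)) = 0. Then d1* > 0 and ρ'(d1*) = λ·(λ·d2 − a22)/(Tr(A) − λ·(d1* + d2)) > 0. -/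
open Real Filter

/-- Differentiating `ρ² - g ρ + h = 0` at a point where `ρ` vanishes kills the `ρ ρ'` and `g' ρ`
terms, leaving `h' = g ρ'`. -/
theorem HasDerivAt.of_quadratic_root_of_eq_zero {ρ g h : ℝ → ℝ} {t₀ g' h' : ℝ}
    (hρ : DifferentiableAt ℝ ρ t₀) (hg : HasDerivAt g g' t₀) (hh : HasDerivAt h h' t₀)
    (hρ0 : ρ t₀ = 0) (hg0 : g t₀ ≠ 0)
    (hroot : ∀ᶠ t in nhds t₀, ρ t ^ 2 - g t * ρ t + h t = 0) :
    HasDerivAt ρ (h' / g t₀) t₀ := by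
  obtain ⟨r, hρ'⟩ : ∃ r, HasDerivAt ρ r t₀ := ⟨_, hρ.hasDerivAt⟩
  have hpoly : HasDerivAt (fun t => ρ t ^ 2 - g t * ρ t + h t)
      (2 * ρ t₀ ^ 1 * r - (g' * ρ t₀ + g t₀ * r) + h') t₀ := by
    simpa using ((hρ'.fun_pow 2).fun_sub (hg.fun_mul hρ')).fun_add hh
  have hzero : HasDerivAt (fun t => ρ t ^ 2 - g t * ρ t + h t) 0 t₀ :=
    (hasDerivAt_const t₀ (0 : ℝ)).congr_of_eventuallyEq hroot
  have hlin : h' = g t₀ * r := by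
    have := hpoly.unique hzero
    rw [hρ0] at this
    linarith
  rwa [hlin, mul_div_cancel_left₀ _ hg0]

theorem eigenvalue_branch_derivative_positive_general (a11 a12 a21 a22 lam d2 d1star : ℝ)
    (ρ : ℝ → ℝ)
    (hTr : a11 + a22 < 0) (hDet : 0 < a11 * a22 - a12 * a21)
    (hlam : 0 < lam) (hd2 : 0 < d2) (hd2' : d2 < a22 / lam)
    (hd1star : d1star =
      (a11 * lam * d2 - (a11 * a22 - a12 * a21)) / (lam * (lam * d2 - a22)))
    (hdiff : DifferentiableAt ℝ ρ d1star)
    (hρ0 : ρ d1star = 0)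
    (hchar : ∀ᶠ t in nhds d1star,
      ρ t ^ 2 - ((a11 + a22) - lam * (t + d2)) * ρ t +
        ((a11 - lam * t) * (a22 - lam * d2) - a12 * a21) = 0) :
    0 < d1star ∧
    deriv ρ d1star = lam * (lam * d2 - a22) / ((a11 + a22) - lam * (d1star + d2)) ∧
    0 < deriv ρ d1star := by
  have hd2a : lam * d2 < a22 := by linarith [(lt_div_iff₀ hlam).mp hd2']
  have hlamd2 : 0 < lam * d2 := mul_pos hlam hd2
  have ha11 : a11 < 0 := by linarith
  have hnum : lam * (lam * d2 - a22) < 0 := mul_neg_of_pos_of_neg hlam (by linarith)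
  have hd1 : 0 < d1star := by
    rw [hd1star]
    exact div_pos_of_neg_of_neg (by linarith [mul_neg_of_neg_of_pos ha11 hlamd2]) hnum
  have htrace : (a11 + a22) - lam * (d1star + d2) < 0 := by
    linarith [mul_pos hlam (add_pos hd1 hd2)]
  have hg : HasDerivAt (fun t => (a11 + a22) - lam * (t + d2)) (-lam) d1star :=
    ((((hasDerivAt_id' (x := d1star)).add_const d2).const_mul lam).const_sub _).congr_deriv
      (by ring)
  have hh : HasDerivAt (fun t => (a11 - lam * t) * (a22 - lam * d2) - a12 * a21)
      (lam * (lam * d2 - a22)) d1star :=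
    (((((hasDerivAt_id' (x := d1star)).const_mul lam).const_sub a11).mul_const _).sub_const
      _).congr_deriv (by ring)
  have hρ := hg.of_quadratic_root_of_eq_zero hdiff hh hρ0 htrace.ne hchar
  rw [hρ.deriv]
  exact ⟨hd1, rfl, div_pos_of_neg_of_neg hnum htrace⟩

theorem eigenvalue_branch_derivative_positive (a11 a12 a21 a22 lam d2 d1star : ℝ)
    (ρ : ℝ → ℝ)
    (hTr : a11 + a22 < 0) (hDet : 0 < a11 * a22 - a12 * a21) (h22 : 0 < a22)
    (hlam : 0 < lam) (hd2 : 0 < d2) (hd2' : d2 < a22 / lam)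
    (hd1star : d1star =
      (a11 * lam * d2 - (a11 * a22 - a12 * a21)) / (lam * (lam * d2 - a22)))
    (hdiff : DifferentiableAt ℝ ρ d1star)
    (hρ0 : ρ d1star = 0)
    (hchar : ∀ᶠ t in nhds d1star,
      ρ t ^ 2 - ((a11 + a22) - lam * (t + d2)) * ρ t +
        ((a11 - lam * t) * (a22 - lam * d2) - a12 * a21) = 0) :
    0 < d1star ∧
    deriv ρ d1star = lam * (lam * d2 - a22) / ((a11 + a22) - lam * (d1star + d2)) ∧
    0 < deriv ρ d1star :=
  eigenvalue_branch_derivative_positive_general a11 a12 a21 a22 lam d2 d1star ρ hTr hDet hlam hd2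
    hd2' hd1star hdiff hρ0 hchar
end

section
/- Let A, K, E, a, b, γ, δ be positive real numbers with 0 < γ < δ and 0 < b − E·δ (so 0 < d < e, where d = γ/(b − γ·E), e = δ/(b − δ·E), c = (b − γ·E)/(b − δ·E) > 1), and assume d < K. Then there exists u0 with d < u0 < min(e, K) such that f(u0) = −c·(u0 − d)/(u0 − e), where f(u) = (A/(a·K))·(K − u)·(1 + E·u); in particular v0 := f(u0) > 0 and (u0, v0) is a nontrivial equilibrium of the kinetic predator-prey system with positive coordinates. -/
open Real

theorem unique_interior_equilibrium_exists (A K E a b γ δ c d e : ℝ)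
    (hA : 0 < A) (hK : 0 < K) (hE : 0 < E) (ha : 0 < a)
    (hb : 0 < b) (hγ : 0 < γ) (hδ : 0 < δ)
    (hγδ : γ < δ) (hbδ : 0 < b - E * δ)
    (hc : c = (b - γ * E) / (b - δ * E))
    (hd : d = γ / (b - γ * E))
    (he : e = δ / (b - δ * E))
    (hdK : d < K) :
    ∃ u0 v0 : ℝ, d < u0 ∧ u0 < min e K ∧
      v0 = (A / (a * K)) * (K - u0) * (1 + E * u0) ∧
      v0 = -c * (u0 - d) / (u0 - e) ∧
      0 < v0 ∧
      A * u0 * (1 - u0 / K) - a * u0 * v0 / (1 + E * u0) = 0 ∧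
      -((γ + δ * v0) / (1 + v0)) * v0 + b * u0 * v0 / (1 + E * u0) = 0 := by
  have hB2 : 0 < b - δ * E := by nlinarith
  have hB1 : 0 < b - γ * E := by nlinarith
  have hd0 : 0 < d := by rw [hd]; positivity
  have hde : d < e := by
    rw [hd, he, div_lt_div_iff₀ hB1 hB2]; nlinarith
  have hc0 : 0 < c := by rw [hc]; positivity
  have hdm : d < min e K := lt_min hde hdK
  set g : ℝ → ℝ := fun u => (A / (a * K)) * (K - u) * (1 + E * u) * (u - e) + c * (u - d)
    with hg
  have hcont : ContinuousOn g (Set.Icc d (min e K)) := by fun_prop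
  have hgd : g d < 0 := by
    have h1 : 0 < (A / (a * K)) * (K - d) * (1 + E * d) := by
      have : 0 < K - d := by linarith
      positivity
    have h2 : d - e < 0 := by linarith
    simp only [hg, sub_self, mul_zero, add_zero]
    nlinarith
  have hgm : 0 < g (min e K) := by
    rcases min_cases e K with ⟨hme, _⟩ | ⟨hmK, hKe⟩
    · rw [hme]; simp only [hg, sub_self, mul_zero, zero_add]
      nlinarith
    · rw [hmK]; simp only [hg, sub_self, mul_zero, zero_mul, zero_add]
      nlinarith
  obtain ⟨u0, hu0, hgu0⟩ := intermediate_value_Ioo hdm.le hcont ⟨hgd, hgm⟩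
  obtain ⟨hu0d, hu0m⟩ := hu0
  have hu0e : u0 < e := lt_of_lt_of_le hu0m (min_le_left _ _)
  have hu0K : u0 < K := lt_of_lt_of_le hu0m (min_le_right _ _)
  have hu00 : 0 < u0 := lt_trans hd0 hu0d
  refine ⟨u0, (A / (a * K)) * (K - u0) * (1 + E * u0), hu0d, hu0m, rfl, ?_, ?_, ?_, ?_⟩
  · rw [eq_div_iff (by intro h; linarith [sub_eq_zero.mp h] : u0 - e ≠ 0)]
    linear_combination hgu0
  · have : 0 < K - u0 := by linarith
    positivity
  · have hEu : (1 : ℝ) + E * u0 ≠ 0 := by positivity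
    field_simp
    ring
  · have hv0 : 0 < (A / (a * K)) * (K - u0) * (1 + E * u0) := by
      have : 0 < K - u0 := by linarith
      positivity
    set v0 := (A / (a * K)) * (K - u0) * (1 + E * u0) with hv
    have hce : c * (b - δ * E) = b - γ * E := by
      rw [hc, div_mul_cancel₀ _ hB2.ne']
    have hde2 : d * (b - γ * E) = γ := by
      rw [hd, div_mul_cancel₀ _ hB1.ne']
    have hee : e * (b - δ * E) = δ := by
      rw [he, div_mul_cancel₀ _ hB2.ne']
    have h : v0 * (u0 - e) + c * (u0 - d) = 0 := by
      simpa [hg, hv] using hgu0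
    have key : v0 * (u0 * (b - δ * E) - δ) + ((b - γ * E) * u0 - γ) = 0 := by
      linear_combination (b - δ * E) * h + v0 * hee + (d - u0) * hce + hde2
    have h1v : (1 : ℝ) + v0 ≠ 0 := by positivity
    have hEu : (1 : ℝ) + E * u0 ≠ 0 := by positivity
    field_simp
    linear_combination v0 * key
end
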